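/- Let n ≥ 2, 1 ≤ k ≤ n−1, and δ₀, δ̃ ∈ (0,1]. Let λ₁ ≥ λ₂ ≥ … ≥ λ_n > 0, set κ_α = 1/λ_α and F^{αα} = σ_{k−1}(κ|α)·κ_α²/σ_k(κ)². Suppose ξ₁,…,ξ_n ∈ ℝ are such that there exists an index α₀ ≥ 2 with |ξ_{α₀}/λ_{α₀}| ≥ δ₀·|ξ₁/λ₁|. Then Σ_{α=1}^n F^{αα}·ξ_α²/λ_α ≥ (1 + δ̃·δ₀²)·F^{11}·ξ₁²/λ₁ + (1−δ̃)·Σ_{α≥2} F^{αα}·ξ_α²/λ_α. -/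

import Mathlib

/-!
Write `T_α = F^{αα} ξ_α²/λ_α = κ_α σ_{k-1}(κ|α) (ξ_α/λ_α)² / σ_k(κ)²`. Expanding `σ_{k-1}(κ|α)`
along a second index `β` shows `κ_β σ_{k-1}(κ|β) - κ_α σ_{k-1}(κ|α) = σ_{k-1}(κ|αβ) (κ_β - κ_α)`,
so the weight `κ_α σ_{k-1}(κ|α)` is nondecreasing in `κ_α`. Since `κ_1` is the smallest entry,
`δ₀² T_1 ≤ T_{α₀} ≤ Σ_{α ≥ 2} T_α`; adding `δ̃` times this to `Σ_α T_α = T_1 + Σ_{α ≥ 2} T_α`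
gives the estimate.
-/

open scoped Classical

noncomputable section

/-- The `j`-th elementary symmetric function of the family `κ` restricted to the
finite index set `s`; it is `1` for `j = 0`, and `0` for `j < 0` (or for `j`
larger than the cardinality of `s`). -/
def sigmaE {ι : Type*} (s : Finset ι) (j : ℤ) (κ : ι → ℝ) : ℝ :=
  if 0 ≤ j then ∑ t ∈ s.powersetCard j.toNat, ∏ i ∈ t, κ i else 0

/-- `σ_j(κ)`, the `j`-th elementary symmetric polynomial evaluated at `κ`. -/
def sigmaV {ι : Type*} [Fintype ι] (j : ℤ) (κ : ι → ℝ) : ℝ :=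
  sigmaE Finset.univ j κ

/-- `σ_j(κ|α)`: `σ_j` of `κ` with the `α`-th entry deleted. -/
def sigmaV1 {ι : Type*} [Fintype ι] [DecidableEq ι] (j : ℤ) (κ : ι → ℝ) (α : ι) : ℝ :=
  sigmaE (Finset.univ.erase α) j κ

/-- `σ_j(κ|αβ)`: `σ_j` of `κ` with the `α`-th and `β`-th entries deleted. -/
def sigmaV2 {ι : Type*} [Fintype ι] [DecidableEq ι] (j : ℤ) (κ : ι → ℝ) (α β : ι) : ℝ :=
  sigmaE ((Finset.univ.erase α).erase β) j κ

/-- `σ_j(A)` for a real `n × n` matrix `A`: the `j`-th elementary symmetric function of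
the eigenvalues of `A` when `A` is symmetric (= Hermitian over `ℝ`), junk value `0`
otherwise. -/
def sigmaMat {n : ℕ} (j : ℤ) (A : Matrix (Fin n) (Fin n) ℝ) : ℝ :=
  if h : A.IsHermitian then sigmaV j h.eigenvalues else 0

/-- The Hessian quotient operator `F(A) = σ_n(A)/σ_{n-k}(A)`. -/
def Fquot {n : ℕ} (k : ℕ) (A : Matrix (Fin n) (Fin n) ℝ) : ℝ :=
  sigmaMat (n : ℤ) A / sigmaMat ((n : ℤ) - (k : ℤ)) A

theorem Multiset.esymm_cons_succ {R : Type*} [CommSemiring R] (a : R) (s : Multiset R) (m : ℕ) :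
    (a ::ₘ s).esymm (m + 1) = s.esymm (m + 1) + a * s.esymm m := by
  simp only [Multiset.esymm, Multiset.powersetCard_cons, Multiset.map_add, Multiset.sum_add,
    Multiset.map_map, Function.comp_def, Multiset.prod_cons, Multiset.sum_map_mul_left]

theorem sigmaE_natCast {ι : Type*} (s : Finset ι) (m : ℕ) (κ : ι → ℝ) :
    sigmaE s m κ = (s.val.map κ).esymm m := by
  simp [sigmaE, Finset.esymm_map_val]

theorem sigmaE_nonneg {ι : Type*} {s : Finset ι} (j : ℤ) {κ : ι → ℝ}
    (hκ : ∀ i ∈ s, 0 ≤ κ i) : 0 ≤ sigmaE s j κ := by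
  unfold sigmaE
  split_ifs
  · exact Finset.sum_nonneg fun t ht =>
      Finset.prod_nonneg fun i hi => hκ i ((Finset.mem_powersetCard.1 ht).1 hi)
  · exact le_rfl

theorem sigmaE_insert {ι : Type*} [DecidableEq ι] {s : Finset ι} {a : ι} (ha : a ∉ s)
    (j : ℤ) (κ : ι → ℝ) :
    sigmaE (insert a s) j κ = sigmaE s j κ + κ a * sigmaE s (j - 1) κ := by
  rcases lt_trichotomy j 0 with hj | rfl | hj
  · simp only [sigmaE, if_neg hj.not_ge, if_neg (show ¬ 0 ≤ j - 1 by omega), mul_zero, add_zero]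
  · simp [sigmaE]
  · obtain ⟨m, rfl⟩ : ∃ m : ℕ, j = m + 1 := ⟨(j - 1).toNat, by omega⟩
    rw [add_sub_cancel_right, ← Nat.cast_succ, sigmaE_natCast, sigmaE_natCast, sigmaE_natCast,
      Finset.insert_val_of_notMem ha, Multiset.map_cons, Multiset.esymm_cons_succ]

theorem sigmaV1_mul_le_of_le {ι : Type*} [Fintype ι] [DecidableEq ι] {κ : ι → ℝ}
    (hκ : ∀ i, 0 ≤ κ i) (j : ℤ) {α β : ι} (hne : α ≠ β) (hle : κ α ≤ κ β) :
    sigmaV1 j κ α * κ α ≤ sigmaV1 j κ β * κ β := by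
  have expand : ∀ {a b : ι}, a ≠ b →
      sigmaV1 j κ a = sigmaV2 j κ a b + κ b * sigmaV2 (j - 1) κ a b := fun {a b} hab => by
    rw [sigmaV1, sigmaV2, sigmaV2, ← sigmaE_insert (Finset.notMem_erase b _),
      Finset.insert_erase (Finset.mem_erase.2 ⟨hab.symm, Finset.mem_univ b⟩)]
  have hsymm : ∀ i, sigmaV2 i κ β α = sigmaV2 i κ α β := fun i => by
    rw [sigmaV2, sigmaV2, Finset.erase_right_comm]
  have hnn : 0 ≤ sigmaV2 j κ α β := sigmaE_nonneg j fun i _ => hκ i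
  rw [expand hne, expand hne.symm, hsymm, hsymm]
  linarith [mul_le_mul_of_nonneg_left hle hnn]

theorem add_mul_le_sum_of_mul_le {ι R : Type*} [DecidableEq ι] [CommRing R] [LinearOrder R]
    [IsStrictOrderedRing R] {s : Finset ι} {a : ι → R} {i j : ι} {c t : R}
    (ha : ∀ x ∈ s, 0 ≤ a x) (hi : i ∈ s) (hj : j ∈ s.erase i) (hij : c * a i ≤ a j)
    (ht : 0 ≤ t) :
    (1 + t * c) * a i + (1 - t) * ∑ x ∈ s.erase i, a x ≤ ∑ x ∈ s, a x := by
  have hj_le : a j ≤ ∑ x ∈ s.erase i, a x :=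
    Finset.single_le_sum (fun x hx => ha x (Finset.mem_of_mem_erase hx)) hj
  have := mul_le_mul_of_nonneg_left (hij.trans hj_le) ht
  rw [← Finset.add_sum_erase s a hi]
  linarith

/-- Case 1 estimate, (2.16): with `λ₁ ≥ ⋯ ≥ λ_n > 0`, `κ_α = 1/λ_α`,
`F^{αα} = σ_{k-1}(κ|α)κ_α²/σ_k(κ)²`, if some index `α₀ ≥ 2` satisfies
`|ξ_{α₀}/λ_{α₀}| ≥ δ₀ |ξ₁/λ₁|`, then
`Σ_α F^{αα} ξ_α²/λ_α ≥ (1 + δ̃δ₀²) F^{11} ξ₁²/λ₁ + (1-δ̃) Σ_{α≥2} F^{αα} ξ_α²/λ_α`. -/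
theorem stmt_13 (n k : ℕ) (hn : 2 ≤ n)
    (δ₀ δt : ℝ) (hδ₀ : 0 < δ₀) (hδt : 0 < δt)
    (lam : Fin n → ℝ) (hpos : ∀ α, 0 < lam α) (hord : ∀ α β : Fin n, α ≤ β → lam β ≤ lam α)
    (ξ : Fin n → ℝ) :
    let i0 : Fin n := ⟨0, by omega⟩
    let κ : Fin n → ℝ := fun α => (lam α)⁻¹
    let Fd : Fin n → ℝ := fun α => sigmaV1 ((k : ℤ) - 1) κ α * (κ α) ^ 2 / (sigmaV (k : ℤ) κ) ^ 2
    (∃ α₀ : Fin n, α₀ ≠ i0 ∧ δ₀ * |ξ i0 / lam i0| ≤ |ξ α₀ / lam α₀|) →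
    ∑ α, Fd α * (ξ α) ^ 2 / lam α
      ≥ (1 + δt * δ₀ ^ 2) * Fd i0 * (ξ i0) ^ 2 / lam i0
        + (1 - δt) * ∑ α ∈ Finset.univ.erase i0, Fd α * (ξ α) ^ 2 / lam α := by
  intro i0 κ Fd ⟨α₀, hne, habs⟩
  have hκ : ∀ α, 0 ≤ κ α := fun α => inv_nonneg.2 (hpos α).le
  set G : Fin n → ℝ := fun α => sigmaV1 ((k : ℤ) - 1) κ α * κ α
  have hG : ∀ α, 0 ≤ G α := fun α => mul_nonneg (sigmaE_nonneg _ fun i _ => hκ i) (hκ α)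
  have hterm : ∀ α, Fd α * ξ α ^ 2 / lam α
      = G α * (ξ α / lam α) ^ 2 / sigmaV (k : ℤ) κ ^ 2 := fun α => by
    have := (hpos α).ne'
    simp only [Fd, G, κ]
    field_simp
  have hGle : G i0 ≤ G α₀ := sigmaV1_mul_le_of_le hκ _ (Ne.symm hne)
    (inv_anti₀ (hpos _) (hord _ _ (Fin.le_def.2 (Nat.zero_le _))))
  have hsq : δ₀ ^ 2 * (ξ i0 / lam i0) ^ 2 ≤ (ξ α₀ / lam α₀) ^ 2 := by
    rw [← mul_pow, sq_le_sq, abs_mul, abs_of_pos hδ₀]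
    exact habs
  have hdom : δ₀ ^ 2 * (Fd i0 * ξ i0 ^ 2 / lam i0) ≤ Fd α₀ * ξ α₀ ^ 2 / lam α₀ := by
    rw [hterm, hterm, mul_div_assoc']
    gcongr ?_ / _
    calc δ₀ ^ 2 * (G i0 * (ξ i0 / lam i0) ^ 2) = G i0 * (δ₀ ^ 2 * (ξ i0 / lam i0) ^ 2) := by ring
      _ ≤ G α₀ * (ξ α₀ / lam α₀) ^ 2 := mul_le_mul hGle hsq (by positivity) (hG α₀)
  have hnonneg : ∀ α ∈ Finset.univ, 0 ≤ Fd α * ξ α ^ 2 / lam α := fun α _ => by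
    rw [hterm]
    exact div_nonneg (mul_nonneg (hG α) (sq_nonneg _)) (sq_nonneg _)
  rw [ge_iff_le, mul_assoc, mul_div_assoc]
  exact add_mul_le_sum_of_mul_le hnonneg (Finset.mem_univ i0)
    (Finset.mem_erase.2 ⟨hne, Finset.mem_univ α₀⟩) hdom hδt.le
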